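/- Every nonzero ideal of K[x₁,…,xₙ] possesses a minimal Janet basis with respect to any monomial ordering ≺: a Janet basis G of I such that LM(G) ⊆ LM(G̃) holds for every Janet basis G̃ of I. -/

import Mathlib

open scoped MonomialOrder

/-- The variable `i` is Janet-multiplicative for the monomial `u` with respect to the
finite set of monomials `U` (monomials are identified with exponent vectors). -/
def JanetMult {n : ℕ} (U : Finset (Fin n →₀ ℕ)) (u : Fin n →₀ ℕ) (i : Fin n) : Prop :=
  ∀ v ∈ U, (∀ j, j < i → v j = u j) → v i ≤ u i

/-- The Janet cone `J(u,U)`: all monomials `u·m` where `m` is a product of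
Janet-multiplicative variables of `u` w.r.t. `U`. -/
def JanetCone {n : ℕ} (U : Finset (Fin n →₀ ℕ)) (u : Fin n →₀ ℕ) : Set (Fin n →₀ ℕ) :=
  { w | (∀ i, u i ≤ w i) ∧ ∀ i, u i < w i → JanetMult U u i }

/-- The leading monomial (exponent vector) of a polynomial w.r.t. a monomial order. -/
noncomputable def LM {n : ℕ} {K : Type*} [Field K] (m : MonomialOrder (Fin n))
    (f : MvPolynomial (Fin n) K) : Fin n →₀ ℕ :=
  m.toSyn.symm (f.support.sup fun c => m.toSyn c)

/-- `f` has a Janet standard representation w.r.t. the finite polynomial set `G`: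
`f = Σ_{g ∈ G} h_g · g` where every monomial of each nonzero `h_g` is a product of
Janet-multiplicative variables of `LM(g)` w.r.t. `LM(G)`, and `LM(h_g·g) ≼ LM(f)`. -/
def JanetSR {n : ℕ} {K : Type*} [Field K] (m : MonomialOrder (Fin n))
    (G : Finset (MvPolynomial (Fin n) K)) (f : MvPolynomial (Fin n) K) : Prop :=
  ∃ h : MvPolynomial (Fin n) K → MvPolynomial (Fin n) K,
    f = ∑ g ∈ G, h g * g ∧
    ∀ g ∈ G, h g ≠ 0 →
      (∀ c ∈ (h g).support, ∀ i, c i ≠ 0 → JanetMult (G.image (LM m)) (LM m g) i) ∧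
      (LM m (h g * g) ≼[m] LM m f)

/-- `G` is a Janet basis of the ideal `I` w.r.t. the monomial order `m`. -/
def JanetBasis {n : ℕ} {K : Type*} [Field K] (m : MonomialOrder (Fin n))
    (I : Ideal (MvPolynomial (Fin n) K)) (G : Finset (MvPolynomial (Fin n) K)) : Prop :=
  (∀ g ∈ G, g ≠ 0) ∧ (↑G : Set (MvPolynomial (Fin n) K)) ⊆ I ∧
    ∀ f ∈ I, f ≠ 0 → ∃ g ∈ G, LM m f ∈ JanetCone (G.image (LM m)) (LM m g)

/-!
The leading monomials of the nonzero elements of `I` form an upper set `S ⊆ ℕⁿ`, and `G` is a Janet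
basis of `I` exactly when `LM(G)` is a Janet basis of `S`: a subset of `S` whose Janet cones cover
`S`. So it suffices to find, for every upper set `S`, a Janet basis contained in all others. Induct
on `n`, slicing `S` by the exponent of `x₁`: the slices `S_d` grow with `d` and, by Dickson's lemma,
stop growing from some least `D` on. Stacking the minimal Janet bases of `S_0, …, S_D` gives one of
`S`. Conversely, in any Janet basis `U` of `S` the variable `x₁` is multiplicative only on the top
layer `E = max {deg₁ u : u ∈ U}`; this forces `D ≤ E` and makes the `d`-th layer of `U` a Janet
basis of `S_d` for every `d ≤ E`, which therefore contains the minimal one.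
-/

open Finsupp

-- Upper sets of a canonically ordered monoid are its semigroup ideals, which satisfy the ACC.
lemma exists_forall_subset_of_isUpperSet {M : Type*} [AddCommMonoid M] [PartialOrder M]
    [CanonicallyOrderedAdd M] [WellQuasiOrderedLE M] {T : ℕ → Set M} (hT : Monotone T)
    (hup : ∀ d, IsUpperSet (T d)) : ∃ D, ∀ e, T e ⊆ T D := by
  let I : ℕ →o AddSemigroupIdeal M :=
    ⟨fun d => ⟨T d, fun _ _ hx => hup d le_add_self hx⟩, fun _ _ hde => hT hde⟩
  obtain ⟨D, hD⟩ := WellFoundedGT.monotone_chain_condition I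
  refine ⟨D, fun e => (le_total e D).elim (fun h => hT h) fun h => ?_⟩
  exact (congrArg SetLike.coe (hD e h)).ge

section MonomialJanetBasis

variable {n : ℕ}

def IsMonomialJanetBasis (S : Set (Fin n →₀ ℕ)) (U : Finset (Fin n →₀ ℕ)) : Prop :=
  ↑U ⊆ S ∧ ∀ s ∈ S, ∃ u ∈ U, s ∈ JanetCone U u

lemma exists_minimal_isMonomialJanetBasis_fin_zero (S : Set (Fin 0 →₀ ℕ)) :
    ∃ U₀, IsMonomialJanetBasis S U₀ ∧ ∀ U, IsMonomialJanetBasis S U → U₀ ⊆ U := by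
  refine ⟨S.toFinite.toFinset,
    ⟨by simp, fun s hs => ⟨s, by simpa, fun i => i.elim0, fun i => i.elim0⟩⟩, fun U hU s hs => ?_⟩
  obtain ⟨u, hu, -⟩ := hU.2 s (by simpa using hs)
  rwa [Subsingleton.elim s u]

noncomputable def layer (d : ℕ) (U : Finset (Fin (n + 1) →₀ ℕ)) : Finset (Fin n →₀ ℕ) :=
  U.preimage (cons d) (cons_right_injective d).injOn

@[simp] lemma mem_layer {d : ℕ} {U : Finset (Fin (n + 1) →₀ ℕ)} {u' : Fin n →₀ ℕ} :
    u' ∈ layer d U ↔ cons d u' ∈ U :=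
  Finset.mem_preimage

lemma Finsupp.forall_cons_iff {M : Type*} [Zero M] {P : (Fin (n + 1) →₀ M) → Prop} :
    (∀ v, P v) ↔ ∀ e v', P (cons e v') :=
  ⟨fun h _ _ => h _, fun h v => cons_tail v ▸ h _ _⟩

lemma janetMult_zero_iff {U : Finset (Fin (n + 1) →₀ ℕ)} {u : Fin (n + 1) →₀ ℕ} :
    JanetMult U u 0 ↔ ∀ v ∈ U, v 0 ≤ u 0 := by
  simp [JanetMult]

lemma janetMult_cons_succ_iff {U : Finset (Fin (n + 1) →₀ ℕ)} {d : ℕ} {u' : Fin n →₀ ℕ}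
    {i : Fin n} : JanetMult U (cons d u') i.succ ↔ JanetMult (layer d U) u' i := by
  rw [JanetMult, forall_cons_iff]
  simp only [JanetMult, Fin.forall_fin_succ, Fin.succ_pos, Fin.succ_lt_succ_iff, cons_zero,
    cons_succ, mem_layer, forall_const]
  refine ⟨fun h v hv hlt => h d v hv ⟨rfl, hlt⟩, ?_⟩
  rintro h e v hv ⟨rfl, hlt⟩
  exact h v hv hlt

lemma cons_mem_janetCone_cons {U : Finset (Fin (n + 1) →₀ ℕ)} {d e : ℕ} {u' w' : Fin n →₀ ℕ} :
    cons e w' ∈ JanetCone U (cons d u') ↔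
      (d ≤ e ∧ (d < e → ∀ v ∈ U, v 0 ≤ d)) ∧ w' ∈ JanetCone (layer d U) u' := by
  simp only [JanetCone, Set.mem_ofPred_eq, Fin.forall_fin_succ, cons_zero, cons_succ,
    janetMult_zero_iff, janetMult_cons_succ_iff]
  tauto

lemma Finsupp.cons_le_cons_iff {M : Type*} [Zero M] [LE M] {d e : M} {u' v' : Fin n →₀ M} :
    cons d u' ≤ cons e v' ↔ d ≤ e ∧ u' ≤ v' := by
  simp only [Finsupp.le_def, Fin.forall_fin_succ, cons_zero, cons_succ]

lemma IsUpperSet.preimage_cons {S : Set (Fin (n + 1) →₀ ℕ)} (hS : IsUpperSet S) (d : ℕ) :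
    IsUpperSet (cons d ⁻¹' S) :=
  fun _ _ h hs => hS (cons_le_cons_iff.2 ⟨le_rfl, h⟩) hs

lemma IsUpperSet.monotone_preimage_cons {S : Set (Fin (n + 1) →₀ ℕ)} (hS : IsUpperSet S) :
    Monotone fun d => cons d ⁻¹' S :=
  fun _ _ h _ hs => hS (cons_le_cons_iff.2 ⟨h, le_rfl⟩) hs

noncomputable def stack (D : ℕ) (B : ℕ → Finset (Fin n →₀ ℕ)) : Finset (Fin (n + 1) →₀ ℕ) :=
  (Finset.range (D + 1)).biUnion fun d => (B d).image (cons d)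

lemma mem_stack {D : ℕ} {B : ℕ → Finset (Fin n →₀ ℕ)} {v : Fin (n + 1) →₀ ℕ} :
    v ∈ stack D B ↔ v 0 ≤ D ∧ tail v ∈ B (v 0) := by
  simp only [stack, Finset.mem_biUnion, Finset.mem_range, Nat.lt_succ_iff, Finset.mem_image]
  constructor
  · rintro ⟨d, hd, u', hu', rfl⟩
    simpa only [cons_zero, tail_cons] using ⟨hd, hu'⟩
  · exact fun ⟨hv, hB⟩ => ⟨v 0, hv, tail v, hB, cons_tail v⟩

lemma layer_stack {D d : ℕ} {B : ℕ → Finset (Fin n →₀ ℕ)} (hd : d ≤ D) :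
    layer d (stack D B) = B d := by
  ext u'
  simp [mem_stack, cons_zero, tail_cons, hd]

lemma isMonomialJanetBasis_stack {S : Set (Fin (n + 1) →₀ ℕ)} {D : ℕ}
    {B : ℕ → Finset (Fin n →₀ ℕ)} (hD : ∀ e, cons e ⁻¹' S ⊆ cons D ⁻¹' S)
    (hB : ∀ d, IsMonomialJanetBasis (cons d ⁻¹' S) (B d)) :
    IsMonomialJanetBasis S (stack D B) := by
  refine ⟨fun v hv => ?_, fun s hs => ?_⟩
  · rw [Finset.mem_coe, mem_stack] at hv
    rw [← cons_tail v]
    exact (hB _).1 hv.2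
  · rw [← cons_tail s] at hs ⊢
    have hsd : tail s ∈ cons (min (s 0) D) ⁻¹' S := by
      rcases le_total (s 0) D with h | h
      · rwa [min_eq_left h]
      · rw [min_eq_right h]
        exact hD _ hs
    obtain ⟨u', hu', hcone⟩ := (hB _).2 _ hsd
    refine ⟨cons (min (s 0) D) u', ?_, cons_mem_janetCone_cons.2 ⟨⟨min_le_left _ _, ?_⟩, ?_⟩⟩
    · simpa [mem_stack, cons_zero, tail_cons] using hu'
    · intro hlt v hv
      have := (mem_stack.1 hv).1
      omega
    · rwa [layer_stack (min_le_right _ _)]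

lemma IsMonomialJanetBasis.exists_mem_layer_min {S : Set (Fin (n + 1) →₀ ℕ)}
    {U : Finset (Fin (n + 1) →₀ ℕ)} (hU : IsMonomialJanetBasis S U) {d : ℕ} {s' : Fin n →₀ ℕ}
    (hs : cons d s' ∈ S) :
    ∃ u' ∈ layer (min d (U.sup (· 0))) U, s' ∈ JanetCone (layer (min d (U.sup (· 0))) U) u' := by
  obtain ⟨u, hu, hcone⟩ := hU.2 _ hs
  obtain ⟨e, u', rfl⟩ : ∃ e u', cons e u' = u := ⟨_, _, cons_tail u⟩
  obtain ⟨⟨hed, hmax⟩, hcone'⟩ := cons_mem_janetCone_cons.1 hcone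
  have heE : e ≤ U.sup (· 0) := by
    simpa only [cons_zero] using Finset.le_sup (f := fun v : Fin (n + 1) →₀ ℕ => v 0) hu
  have he : e = min d (U.sup (· 0)) := by
    rcases hed.lt_or_eq with hlt | rfl
    · have := Finset.sup_le (hmax hlt)
      omega
    · omega
  exact he ▸ ⟨u', mem_layer.2 hu, hcone'⟩

lemma stack_subset_of_isMonomialJanetBasis {S : Set (Fin (n + 1) →₀ ℕ)} (hS : IsUpperSet S)
    {D : ℕ} (hD : ∀ d, (∀ e, cons e ⁻¹' S ⊆ cons d ⁻¹' S) → D ≤ d)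
    {B : ℕ → Finset (Fin n →₀ ℕ)}
    (hB : ∀ d U', IsMonomialJanetBasis (cons d ⁻¹' S) U' → B d ⊆ U')
    {U : Finset (Fin (n + 1) →₀ ℕ)} (hU : IsMonomialJanetBasis S U) : stack D B ⊆ U := by
  have hlayer (d : ℕ) (hd : d ≤ U.sup (· 0)) : IsMonomialJanetBasis (cons d ⁻¹' S) (layer d U) :=
    ⟨fun u' hu' => hU.1 (mem_layer.1 hu'),
      fun s' hs' => by simpa only [min_eq_left hd] using hU.exists_mem_layer_min hs'⟩
  have hDE : D ≤ U.sup (· 0) := hD _ fun e s' hs' => by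
    obtain ⟨u', hu', hcone⟩ := hU.exists_mem_layer_min
      (hS.monotone_preimage_cons (Nat.le_add_left e (U.sup (· 0))) hs')
    rw [min_eq_right (Nat.le_add_right _ e)] at hu' hcone
    exact hS.preimage_cons _ hcone.1 (hU.1 (mem_layer.1 hu'))
  intro v hv
  rw [mem_stack] at hv
  rw [← cons_tail v]
  exact mem_layer.1 (hB _ _ (hlayer _ (hv.1.trans hDE)) hv.2)

theorem exists_minimal_isMonomialJanetBasis :
    ∀ {n : ℕ} {S : Set (Fin n →₀ ℕ)}, IsUpperSet S →
      ∃ U₀, IsMonomialJanetBasis S U₀ ∧ ∀ U, IsMonomialJanetBasis S U → U₀ ⊆ U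
  | 0, S, _ => exists_minimal_isMonomialJanetBasis_fin_zero S
  | _ + 1, _, hS => by
    classical
    choose B hB hBmin using fun d => exists_minimal_isMonomialJanetBasis (hS.preimage_cons d)
    have hstab := exists_forall_subset_of_isUpperSet hS.monotone_preimage_cons hS.preimage_cons
    exact ⟨stack (Nat.find hstab) B, isMonomialJanetBasis_stack (Nat.find_spec hstab) hB,
      fun _ hU => stack_subset_of_isMonomialJanetBasis hS (fun _ => Nat.find_min' hstab) hBmin hU⟩

end MonomialJanetBasis

section LeadingMonomials

variable {n : ℕ} {K : Type*} [Field K] (m : MonomialOrder (Fin n))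

def leadingMonomials (I : Ideal (MvPolynomial (Fin n) K)) : Set (Fin n →₀ ℕ) :=
  {c | ∃ f ∈ I, f ≠ 0 ∧ LM m f = c}

lemma LM_eq_degree (f : MvPolynomial (Fin n) K) : LM m f = m.degree f := rfl

lemma isUpperSet_leadingMonomials (I : Ideal (MvPolynomial (Fin n) K)) :
    IsUpperSet (leadingMonomials m I) := by
  classical
  rintro s t hst ⟨f, hfI, hf0, rfl⟩
  have hmon : MvPolynomial.monomial (t - LM m f) (1 : K) ≠ 0 := by simp
  refine ⟨_ * f, I.mul_mem_left _ hfI, mul_ne_zero hmon hf0, ?_⟩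
  rw [LM_eq_degree, m.degree_mul hmon hf0, m.degree_monomial, if_neg one_ne_zero,
    ← LM_eq_degree, tsub_add_cancel_of_le hst]

variable {m}

lemma janetBasis_iff {I : Ideal (MvPolynomial (Fin n) K)} {G : Finset (MvPolynomial (Fin n) K)} :
    JanetBasis m I G ↔ (∀ g ∈ G, g ≠ 0) ∧ (↑G : Set (MvPolynomial (Fin n) K)) ⊆ I ∧
      IsMonomialJanetBasis (leadingMonomials m I) (G.image (LM m)) := by
  refine ⟨fun ⟨hG0, hGI, hcov⟩ => ⟨hG0, hGI, ?_, ?_⟩,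
    fun ⟨hG0, hGI, _, hcov⟩ => ⟨hG0, hGI, fun f hfI hf0 => ?_⟩⟩
  · rw [Finset.coe_image, Set.image_subset_iff]
    exact fun g hg => ⟨g, hGI hg, hG0 g hg, rfl⟩
  · rintro _ ⟨f, hfI, hf0, rfl⟩
    obtain ⟨g, hg, hcone⟩ := hcov f hfI hf0
    exact ⟨_, Finset.mem_image_of_mem _ hg, hcone⟩
  · obtain ⟨_, hu, hcone⟩ := hcov _ ⟨f, hfI, hf0, rfl⟩
    obtain ⟨g, hg, rfl⟩ := Finset.mem_image.1 hu
    exact ⟨g, hg, hcone⟩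

lemma exists_finset_image_LM_eq {I : Ideal (MvPolynomial (Fin n) K)} {U : Finset (Fin n →₀ ℕ)}
    (hU : ↑U ⊆ leadingMonomials m I) :
    ∃ G : Finset (MvPolynomial (Fin n) K), (∀ g ∈ G, g ≠ 0) ∧
      (↑G : Set (MvPolynomial (Fin n) K)) ⊆ I ∧ G.image (LM m) = U := by
  classical
  choose! f hfI hf0 hfLM using fun u (hu : u ∈ U) => hU hu
  refine ⟨U.image f, Finset.forall_mem_image.2 hf0, ?_, ?_⟩
  · rw [Finset.coe_image, Set.image_subset_iff]
    exact hfI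
  · rw [Finset.image_image, Finset.image_congr (f := LM m ∘ f) (g := id) hfLM, Finset.image_id]

end LeadingMonomials

theorem exists_minimal_janetBasis_general {n : ℕ} {K : Type*} [Field K]
    (m : MonomialOrder (Fin n)) (I : Ideal (MvPolynomial (Fin n) K)) :
    ∃ G : Finset (MvPolynomial (Fin n) K), JanetBasis m I G ∧
      ∀ G' : Finset (MvPolynomial (Fin n) K), JanetBasis m I G' →
        G.image (LM m) ⊆ G'.image (LM m) := by
  obtain ⟨U₀, hU₀, hU₀min⟩ :=
    exists_minimal_isMonomialJanetBasis (isUpperSet_leadingMonomials m I)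
  obtain ⟨G, hG0, hGI, hGU₀⟩ := exists_finset_image_LM_eq hU₀.1
  refine ⟨G, janetBasis_iff.2 ⟨hG0, hGI, hGU₀ ▸ hU₀⟩, fun G' hG' => ?_⟩
  exact hGU₀ ▸ hU₀min _ (janetBasis_iff.1 hG').2.2

theorem exists_minimal_janetBasis {n : ℕ} {K : Type*} [Field K]
    (m : MonomialOrder (Fin n)) (I : Ideal (MvPolynomial (Fin n) K)) (hI : I ≠ ⊥) :
    ∃ G : Finset (MvPolynomial (Fin n) K), JanetBasis m I G ∧
      ∀ G' : Finset (MvPolynomial (Fin n) K), JanetBasis m I G' →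
        G.image (LM m) ⊆ G'.image (LM m) :=
  exists_minimal_janetBasis_general m I
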